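/- Let λ be a minimal root and s ∈ B. Then exactly one of the following three options holds: (i) λ = α_s (in which case ρ(s) λ = −α_s is a negative root); (ii) ρ(s) λ is a minimal root; (iii) ρ(s) λ is a positive root, different from α_s, which dominates α_s (in particular ρ(s) λ is not minimal). -/

import Mathlib

open Real

variable {B : Type*}

/-- The pairing constant `⟨α_s, α_t⟩` of the standard bilinear form:
`-cos (π / M s t)` if `M s t ≠ 0`, and `-1` if `M s t = 0` (i.e. `m_{s,t} = ∞`). -/
noncomputable def pairing (M : CoxeterMatrix B) (s t : B) : ℝ :=
  if M s t = 0 then -1 else -Real.cos (Real.pi / (M s t : ℝ))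

/-- The standard symmetric bilinear form on `V = B → ℝ`. -/
noncomputable def form [Fintype B] (M : CoxeterMatrix B) (v w : B → ℝ) : ℝ :=
  ∑ s, ∑ t, v s * w t * pairing M s t

/-- The simple root `α_s`, i.e. the standard basis vector at `s`. -/
noncomputable def sroot [DecidableEq B] (s : B) : B → ℝ := Pi.single s 1

/-- `λ` is a root: `λ = ρ(w) α_s` for some `w ∈ W`, `s ∈ B`. -/
def IsRoot [DecidableEq B] (M : CoxeterMatrix B)
    (ρ : M.Group →* Module.End ℝ (B → ℝ)) (lam : B → ℝ) : Prop :=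
  ∃ (w : M.Group) (s : B), ρ w (sroot s) = lam

/-- `λ` is positive: all coordinates are nonnegative. -/
def IsPos (lam : B → ℝ) : Prop := ∀ s, 0 ≤ lam s

/-- `λ` is negative: all coordinates are nonpositive. -/
def IsNeg (lam : B → ℝ) : Prop := ∀ s, lam s ≤ 0

/-- `λ` is a positive root. -/
def IsPosRoot [DecidableEq B] (M : CoxeterMatrix B)
    (ρ : M.Group →* Module.End ℝ (B → ℝ)) (lam : B → ℝ) : Prop :=
  IsRoot M ρ lam ∧ IsPos lam

/-- `λ` dominates `μ`: for every `w ∈ W`, if `ρ(w) μ` is positive then so is `ρ(w) λ`. -/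
def Dominates (M : CoxeterMatrix B)
    (ρ : M.Group →* Module.End ℝ (B → ℝ)) (lam mu : B → ℝ) : Prop :=
  ∀ w : M.Group, IsPos (ρ w mu) → IsPos (ρ w lam)

/-- `λ` is a minimal root: a positive root dominating no positive root other than itself. -/
def IsMinimal [DecidableEq B] (M : CoxeterMatrix B)
    (ρ : M.Group →* Module.End ℝ (B → ℝ)) (lam : B → ℝ) : Prop :=
  IsPosRoot M ρ lam ∧
    ∀ mu, IsPosRoot M ρ mu → Dominates M ρ lam mu → mu = lam

/-- The depth `δ(λ)` of a positive root:
the least Coxeter length of a `w ∈ W` with `ρ(w⁻¹) λ` negative. -/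
noncomputable def depth (M : CoxeterMatrix B)
    (ρ : M.Group →* Module.End ℝ (B → ℝ)) (lam : B → ℝ) : ℕ :=
  sInf {n | ∃ w : M.Group, IsNeg (ρ w⁻¹ lam) ∧ M.toCoxeterSystem.length w = n}

/-- The partial order `λ ⪯ μ` on positive roots:
`μ = ρ(w) λ` for some `w` with `δ(μ) = ℓ(w) + δ(λ)`. -/
def PLE (M : CoxeterMatrix B)
    (ρ : M.Group →* Module.End ℝ (B → ℝ)) (lam mu : B → ℝ) : Prop :=
  ∃ w : M.Group, mu = ρ w lam ∧
    depth M ρ mu = M.toCoxeterSystem.length w + depth M ρ lam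

/-- The Coxeter graph of `M`: distinct `s`, `t` are adjacent iff `M s t ≥ 3` or `M s t = 0`. -/
def coxGraph (M : CoxeterMatrix B) : SimpleGraph B where
  Adj s t := s ≠ t ∧ (M s t = 0 ∨ 3 ≤ M s t)
  symm := by
    constructor
    intro s t h
    exact ⟨h.1.symm, by rw [M.symmetric t s]; exact h.2⟩
  loopless := by constructor; intro s h; exact h.1 rfl

/-- The support of a vector `λ ∈ V`. -/
def supp (lam : B → ℝ) : Set B := {s | lam s ≠ 0}

/-- `ExactlyOne p q r` means exactly one of the three propositions holds. -/
def ExactlyOne (p q r : Prop) : Prop :=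
  (p ∧ ¬q ∧ ¬r) ∨ (¬p ∧ q ∧ ¬r) ∨ (¬p ∧ ¬q ∧ r)

/-!
If `ℓ(w s_i) > ℓ(w)` then `ρ(w) α_i ≥ 0`. By induction on `ℓ(w)`: factor `w = v u` with `u`
in the parabolic subgroup generated by `i` and a right descent `t` of `w`, and `v` without
right descents in `{i, t}`. Then `u` is an alternating word of length less than `m = M i t`,
so it sends `α_i` to a nonnegative combination of `α_i` and `α_t`, with coefficients
`sin (k π / m) / sin (π / m)`. Hence every root is positive or negative, and since roots have
norm one, `α_s` is the only positive root that `ρ(s)` does not keep positive.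

So if the minimal root `λ` is not `α_s`, then `μ = ρ(s) λ` is a positive root. If `μ`
dominates a positive root `ν ≠ μ`, then `λ` dominates `ρ(s) ν`; by minimality of `λ` this
cannot be a positive root, which forces `ν = α_s`.
-/

namespace CoxeterSystem

variable {W : Type*} [Group W] {M : CoxeterMatrix B}

theorem IsReduced.isChain_ne {cs : CoxeterSystem M W} {ω : List B} (hω : cs.IsReduced ω) :
    ω.IsChain (· ≠ ·) := by
  refine List.isChain_iff_forall_rel_of_append_cons_cons.mpr ?_
  rintro x _ l₁ l₂ rfl rfl
  have hprod : cs.wordProd (l₁ ++ x :: x :: l₂) = cs.wordProd (l₁ ++ l₂) := by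
    simp only [wordProd_append, wordProd_cons, simple_mul_simple_cancel_left]
  have := cs.length_wordProd_le (l₁ ++ l₂)
  rw [← hprod, hω.eq] at this
  simp at this

theorem append_singleton_eq_alternatingWord {i i' : B} {ω : List B}
    (hω : ∀ x ∈ ω, x = i ∨ x = i') (hchain : (ω ++ [i']).IsChain (· ≠ ·)) :
    ω ++ [i'] = alternatingWord i i' (ω.length + 1) := by
  induction ω using List.reverseRecOn generalizing i i' with
  | nil => rfl
  | append_singleton l x ih =>
    have hx : x ≠ i' := (List.isChain_append.mp hchain).2.2 x (by simp) i' (by simp)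
    have hxi : x = i := (hω x (by simp)).resolve_right hx
    subst hxi
    have hl : l ++ [x] = alternatingWord i' x (l.length + 1) :=
      ih (fun y hy => (hω y (by simp [hy])).symm) (List.isChain_append.mp hchain).1
    rw [hl, length_alternatingWord, alternatingWord_succ x i' (l.length + 1),
      List.concat_eq_append]

variable (cs : CoxeterSystem M W)

theorem exists_eq_mul_wordProd_pair (i t : B) (w : W) :
    ∃ (v : W) (ω : List B), (∀ x ∈ ω, x = i ∨ x = t) ∧ w = v * cs.wordProd ω ∧
      cs.length w = cs.length v + ω.length ∧
      ¬cs.IsRightDescent v i ∧ ¬cs.IsRightDescent v t := by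
  induction hn : cs.length w using Nat.strong_induction_on generalizing w with
  | _ n ih =>
  by_cases hdes : ∃ x, (x = i ∨ x = t) ∧ cs.IsRightDescent w x
  · obtain ⟨x, hx, hwx⟩ := hdes
    have hlen := cs.isRightDescent_iff.mp hwx
    obtain ⟨v, ω, hω, hw, hl, hvi, hvt⟩ := ih _ (by omega) (w * cs.simple x) rfl
    refine ⟨v, ω ++ [x], ?_, ?_, ?_, hvi, hvt⟩
    · simpa [or_imp, forall_and] using ⟨hω, hx⟩
    · rw [wordProd_append, wordProd_singleton, ← mul_assoc, ← hw,
        simple_mul_simple_cancel_right]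
    · simp only [List.length_append, List.length_singleton]
      omega
  · push Not at hdes
    exact ⟨w, [], by simp, by simp, by simp [hn], hdes i (.inl rfl), hdes t (.inr rfl)⟩

theorem eq_alternatingWord_of_isReduced_append {i t : B} {ω : List B}
    (hω : ∀ x ∈ ω, x = i ∨ x = t) (hred : cs.IsReduced (ω ++ [i])) :
    ω = alternatingWord i t ω.length ∧ (M i t = 0 ∨ ω.length < M i t) := by
  have halt : ω ++ [i] = alternatingWord t i (ω.length + 1) :=
    append_singleton_eq_alternatingWord (fun x hx => (hω x hx).symm) hred.isChain_ne
  refine ⟨List.append_cancel_right (halt.trans ?_), ?_⟩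
  · rw [alternatingWord_succ, List.concat_eq_append]
  · by_contra! h
    rw [M.symmetric] at h
    exact cs.not_isReduced_alternatingWord t i h.1 (by omega) (halt ▸ hred)

end CoxeterSystem

open CoxeterSystem Polynomial.Chebyshev

theorem pairing_self (M : CoxeterMatrix B) (s : B) : pairing M s s = 1 := by
  simp [pairing]

theorem pairing_comm (M : CoxeterMatrix B) (s t : B) : pairing M s t = pairing M t s := by
  rw [pairing, pairing, M.symmetric]

section Form

variable [Fintype B] (M : CoxeterMatrix B)

theorem form_comm (v w : B → ℝ) : form M v w = form M w v := by
  unfold form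
  rw [Finset.sum_comm]
  refine Finset.sum_congr rfl fun s _ => Finset.sum_congr rfl fun t _ => ?_
  rw [pairing_comm]
  ring

variable [DecidableEq B]

theorem form_eq_toBilin' (v w : B → ℝ) :
    form M v w = Matrix.toBilin' (Matrix.of (pairing M)) v w := by
  simp only [form, Matrix.toBilin'_apply, Matrix.of_apply]
  refine Finset.sum_congr rfl fun s _ => Finset.sum_congr rfl fun t _ => ?_
  ring

theorem form_sroot_sroot (s t : B) : form M (sroot s) (sroot t) = pairing M s t := by
  simp [form_eq_toBilin', sroot]

theorem form_sroot_self (s : B) : form M (sroot s) (sroot s) = 1 := by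
  rw [form_sroot_sroot, pairing_self]

end Form

theorem isPos_sroot [DecidableEq B] (s : B) : IsPos (sroot s) := by
  intro u
  rw [sroot, Pi.single_apply]
  split_ifs <;> norm_num

theorem not_isPos_neg_sroot [DecidableEq B] (s : B) : ¬IsPos (-sroot s) := fun h => by
  have := h s
  norm_num [sroot] at this

/-- For `m = M i t`, this is `sin ((n + 1) π / m) / sin (π / m)` if `m ≠ 0`, and `n + 1` if
`m = 0`: the coefficients by which the alternating words in `s_i, s_t` act on `α_i`. -/
noncomputable def rankTwoCoeff (M : CoxeterMatrix B) (i t : B) (n : ℤ) : ℝ :=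
  (U ℝ n).eval (-pairing M i t)

theorem rankTwoCoeff_add_one (M : CoxeterMatrix B) (i t : B) (n : ℤ) :
    rankTwoCoeff M i t (n + 1) =
      -2 * pairing M i t * rankTwoCoeff M i t n - rankTwoCoeff M i t (n - 1) := by
  simp [rankTwoCoeff, U_add_one]

theorem rankTwoCoeff_nonneg (M : CoxeterMatrix B) {i t : B} (hit : i ≠ t) {n : ℤ}
    (hn₀ : -1 ≤ n) (hn : M i t = 0 ∨ n < M i t) : 0 ≤ rankTwoCoeff M i t n := by
  by_cases hm : M i t = 0
  · simp only [rankTwoCoeff, pairing, hm, if_true, neg_neg, U_eval_one]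
    exact_mod_cast (by omega : (0 : ℤ) ≤ n + 1)
  have hm2 : (2 : ℝ) ≤ M i t := by
    have := M.off_diagonal i t hit
    exact_mod_cast (by omega : 2 ≤ M i t)
  have hθ : 0 < Real.sin (Real.pi / M i t) := by
    apply Real.sin_pos_of_pos_of_lt_pi (by positivity)
    rw [div_lt_iff₀ (by positivity)]
    nlinarith [Real.pi_pos]
  have hnθ : 0 ≤ Real.sin ((n + 1) * (Real.pi / M i t)) := by
    have h0 : (0 : ℝ) ≤ n + 1 := by exact_mod_cast (by omega : (0 : ℤ) ≤ n + 1)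
    have h1 : (n : ℝ) + 1 ≤ M i t := by exact_mod_cast (by omega : n + 1 ≤ (M i t : ℤ))
    apply Real.sin_nonneg_of_nonneg_of_le_pi (by positivity)
    rw [mul_div_assoc', div_le_iff₀ (by positivity)]
    nlinarith [Real.pi_pos]
  rw [rankTwoCoeff, pairing, if_neg hm, neg_neg]
  exact nonneg_of_mul_nonneg_left ((U_real_cos _ n).symm ▸ hnθ) hθ

section Representation

variable {W : Type*} [Group W] [DecidableEq B] [Fintype B] {M : CoxeterMatrix B}
  (cs : CoxeterSystem M W) (ρ : W →* Module.End ℝ (B → ℝ))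
  (hρ : ∀ (s : B) (v : B → ℝ),
    ρ (cs.simple s) v = v - (2 * form M v (sroot s)) • sroot s)
include hρ

theorem simple_apply_sroot (s t : B) :
    ρ (cs.simple t) (sroot s) = sroot s - (2 * pairing M s t) • sroot t := by
  rw [hρ, form_sroot_sroot]

theorem simple_apply_sroot_self (s : B) : ρ (cs.simple s) (sroot s) = -sroot s := by
  rw [simple_apply_sroot cs ρ hρ, pairing_self]
  module

theorem simple_apply_apply_of_ne {s u : B} (h : u ≠ s) (v : B → ℝ) :
    ρ (cs.simple s) v u = v u := by
  simp [hρ, sroot, h]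

theorem form_apply_apply (w : W) (v v' : B → ℝ) :
    form M (ρ w v) (ρ w v') = form M v v' := by
  induction w using cs.simple_induction generalizing v v' with
  | simple s =>
    have hs := form_sroot_self M s
    have hc := form_comm M (sroot s) v'
    simp only [hρ, form_eq_toBilin', map_sub, map_smul, LinearMap.sub_apply,
      LinearMap.smul_apply, smul_eq_mul] at hs hc ⊢
    rw [hs, hc]
    ring
  | one => simp
  | mul w w' hw hw' => rw [map_mul, Module.End.mul_apply, Module.End.mul_apply, hw, hw']

theorem apply_wordProd_alternatingWord_sroot (i t : B) (k : ℕ) :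
    ρ (cs.wordProd (alternatingWord i t k)) (sroot i) =
      (if Even k then rankTwoCoeff M i t k else rankTwoCoeff M i t (k - 1)) • sroot i +
        (if Even k then rankTwoCoeff M i t (k - 1) else rankTwoCoeff M i t k) • sroot t := by
  induction k with
  | zero => simp [alternatingWord, rankTwoCoeff]
  | succ k ih =>
    have hrec := rankTwoCoeff_add_one M i t k
    rw [alternatingWord_succ', cs.wordProd_cons, map_mul, Module.End.mul_apply, ih]
    rcases Nat.even_or_odd k with hk | hk
    · simp only [hk, Nat.even_add_one, if_true, not_true, if_false, map_add, map_smul,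
        simple_apply_sroot cs ρ hρ, pairing_self]
      push_cast
      rw [add_sub_cancel_right, hrec]
      module
    · simp only [Nat.not_even_iff_odd.mpr hk, Nat.even_add_one, if_true, not_false_eq_true,
        if_false, map_add, map_smul, simple_apply_sroot cs ρ hρ,
        pairing_self, pairing_comm M t i]
      push_cast
      rw [add_sub_cancel_right, hrec]
      module

theorem exists_nonneg_apply_wordProd_alternatingWord_sroot {i t : B} (hit : i ≠ t) {k : ℕ}
    (hk : M i t = 0 ∨ k < M i t) :
    ∃ a b : ℝ, 0 ≤ a ∧ 0 ≤ b ∧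
      ρ (cs.wordProd (alternatingWord i t k)) (sroot i) = a • sroot i + b • sroot t := by
  have h₀ := rankTwoCoeff_nonneg M hit (n := k) (by omega) (by omega)
  have h₁ := rankTwoCoeff_nonneg M hit (n := k - 1) (by omega) (by omega)
  exact ⟨_, _, by split_ifs <;> assumption, by split_ifs <;> assumption,
    apply_wordProd_alternatingWord_sroot cs ρ hρ i t k⟩

theorem isPos_apply_sroot_of_not_isRightDescent {w : W} {i : B}
    (hi : ¬cs.IsRightDescent w i) : IsPos (ρ w (sroot i)) := by
  induction hn : cs.length w using Nat.strong_induction_on generalizing w i with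
  | _ n ih =>
  rcases eq_or_ne w 1 with rfl | hw
  · simpa using isPos_sroot i
  obtain ⟨t, ht⟩ := cs.exists_rightDescent_of_ne_one hw
  have hit : i ≠ t := by
    rintro rfl
    exact hi ht
  obtain ⟨v, ω, hω, rfl, hlen, hvi, hvt⟩ := cs.exists_eq_mul_wordProd_pair i t w
  have hω_ne : ω ≠ [] := by
    rintro rfl
    rw [wordProd_nil, mul_one] at ht
    exact hvt ht
  have hv : cs.length v < n := by
    have := List.length_pos_of_ne_nil hω_ne
    omega
  have hred : cs.IsReduced (ω ++ [i]) := by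
    have h₁ := cs.not_isRightDescent_iff.mp hi
    have h₂ := cs.length_mul_le v (cs.wordProd ω * cs.simple i)
    have h₃ := cs.length_wordProd_le (ω ++ [i])
    rw [mul_assoc] at h₁
    show cs.length (cs.wordProd (ω ++ [i])) = (ω ++ [i]).length
    rw [wordProd_append, wordProd_singleton, List.length_append, List.length_singleton] at h₃ ⊢
    omega
  obtain ⟨hω_alt, hbound⟩ := cs.eq_alternatingWord_of_isReduced_append hω hred
  obtain ⟨a, b, ha, hb, hab⟩ :=
    exists_nonneg_apply_wordProd_alternatingWord_sroot cs ρ hρ hit hbound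
  have hvi' := ih _ hv hvi rfl
  have hvt' := ih _ hv hvt rfl
  rw [hω_alt, map_mul, Module.End.mul_apply, hab, map_add, map_smul, map_smul]
  intro x
  exact add_nonneg (mul_nonneg ha (hvi' x)) (mul_nonneg hb (hvt' x))

theorem isPos_or_isNeg_apply_sroot (w : W) (i : B) :
    IsPos (ρ w (sroot i)) ∨ IsNeg (ρ w (sroot i)) := by
  by_cases hi : cs.IsRightDescent w i
  · have hpos := isPos_apply_sroot_of_not_isRightDescent cs ρ hρ
      (cs.isRightDescent_iff_not_isRightDescent_mul.mp hi)
    rw [map_mul, Module.End.mul_apply, simple_apply_sroot_self cs ρ hρ, map_neg] at hpos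
    exact Or.inr fun x => by simpa using hpos x
  · exact Or.inl (isPos_apply_sroot_of_not_isRightDescent cs ρ hρ hi)

end Representation

section Roots

variable {M : CoxeterMatrix B} {ρ : M.Group →* Module.End ℝ (B → ℝ)}

theorem simple_apply_simple_apply (s : B) (v : B → ℝ) :
    ρ (M.simple s) (ρ (M.simple s) v) = v := by
  rw [← Module.End.mul_apply, ← map_mul, ← M.toCoxeterSystem_simple,
    M.toCoxeterSystem.simple_mul_simple_self, map_one, Module.End.one_apply]

theorem IsRoot.apply [DecidableEq B] {lam : B → ℝ} (h : IsRoot M ρ lam) (g : M.Group) :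
    IsRoot M ρ (ρ g lam) := by
  obtain ⟨w, s, rfl⟩ := h
  exact ⟨g * w, s, by rw [map_mul, Module.End.mul_apply]⟩

theorem Dominates.apply {lam mu : B → ℝ} (h : Dominates M ρ lam mu) (g : M.Group) :
    Dominates M ρ (ρ g lam) (ρ g mu) := by
  intro w hw
  rw [← Module.End.mul_apply, ← map_mul] at hw ⊢
  exact h (w * g) hw

variable [DecidableEq B] [Fintype B]
  (hρ : ∀ (s : B) (v : B → ℝ),
    ρ (M.simple s) v = v - (2 * form M v (sroot s)) • sroot s)
include hρ

theorem IsRoot.isPos_or_isNeg {lam : B → ℝ} (h : IsRoot M ρ lam) :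
    IsPos lam ∨ IsNeg lam := by
  obtain ⟨w, s, rfl⟩ := h
  exact isPos_or_isNeg_apply_sroot M.toCoxeterSystem ρ hρ w s

theorem IsRoot.form_self {lam : B → ℝ} (h : IsRoot M ρ lam) : form M lam lam = 1 := by
  obtain ⟨w, s, rfl⟩ := h
  rw [form_apply_apply M.toCoxeterSystem ρ hρ, form_sroot_self]

theorem IsPosRoot.eq_sroot_of_not_isPos_simple_apply {nu : B → ℝ} (h : IsPosRoot M ρ nu)
    {s : B} (hs : ¬IsPos (ρ (M.simple s) nu)) : nu = sroot s := by
  have hneg := ((h.1.apply (M.simple s)).isPos_or_isNeg hρ).resolve_left hs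
  have hsupp : ∀ u, u ≠ s → nu u = 0 := fun u hu =>
    le_antisymm (simple_apply_apply_of_ne M.toCoxeterSystem ρ hρ hu nu ▸ hneg u) (h.2 u)
  have hnu : nu = nu s • sroot s := by
    funext u
    by_cases hu : u = s
    · simp [hu, sroot]
    · simp [hu, hsupp u hu, sroot]
  have hnorm := h.1.form_self hρ
  rw [hnu] at hnorm
  simp only [form_eq_toBilin', map_smul, LinearMap.smul_apply, smul_eq_mul] at hnorm
  rw [← form_eq_toBilin', form_sroot_self, mul_one] at hnorm
  have hs1 : nu s = 1 := by nlinarith [h.2 s]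
  rw [hnu, hs1, one_smul]

theorem simple_apply_ne_sroot {lam : B → ℝ} (h : IsPos lam) (s : B) :
    ρ (M.simple s) lam ≠ sroot s := by
  intro heq
  have hlam : lam = -sroot s := by
    rw [← simple_apply_simple_apply s lam, heq]
    exact simple_apply_sroot_self M.toCoxeterSystem ρ hρ s
  exact not_isPos_neg_sroot s (hlam ▸ h)

theorem IsMinimal.dominates_sroot {lam : B → ℝ} (hlam : IsMinimal M ρ lam) {s : B}
    (hμ : IsPosRoot M ρ (ρ (M.simple s) lam)) (hnot : ¬IsMinimal M ρ (ρ (M.simple s) lam)) :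
    Dominates M ρ (ρ (M.simple s) lam) (sroot s) := by
  obtain ⟨nu, hnu, hdom, hne⟩ : ∃ nu, IsPosRoot M ρ nu ∧
      Dominates M ρ (ρ (M.simple s) lam) nu ∧ nu ≠ ρ (M.simple s) lam := by
    simpa [IsMinimal, hμ] using hnot
  have hdom' := hdom.apply (M.simple s)
  rw [simple_apply_simple_apply] at hdom'
  by_cases hpos : IsPos (ρ (M.simple s) nu)
  · refine absurd ?_ hne
    rw [← hlam.2 _ ⟨hnu.1.apply _, hpos⟩ hdom', simple_apply_simple_apply]
  · rwa [← hnu.eq_sroot_of_not_isPos_simple_apply hρ hpos]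

end Roots

theorem statement3 [DecidableEq B] [Fintype B] (M : CoxeterMatrix B)
    (ρ : M.Group →* Module.End ℝ (B → ℝ))
    (hρ : ∀ (s : B) (v : B → ℝ),
      ρ (M.simple s) v = v - (2 * form M v (sroot s)) • sroot s)
    (lam : B → ℝ) (hlam : IsMinimal M ρ lam) (s : B) :
    ExactlyOne
      (lam = sroot s ∧ ρ (M.simple s) lam = -(sroot s) ∧ IsNeg (ρ (M.simple s) lam))
      (IsMinimal M ρ (ρ (M.simple s) lam))
      (IsPosRoot M ρ (ρ (M.simple s) lam) ∧ ρ (M.simple s) lam ≠ sroot s ∧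
        Dominates M ρ (ρ (M.simple s) lam) (sroot s) ∧
        ¬ IsMinimal M ρ (ρ (M.simple s) lam)) := by
  by_cases hls : lam = sroot s
  · have hneg : ρ (M.simple s) lam = -sroot s := by
      rw [hls]
      exact simple_apply_sroot_self M.toCoxeterSystem ρ hρ s
    have hnot : ¬IsPos (ρ (M.simple s) lam) := hneg ▸ not_isPos_neg_sroot s
    have hneg' : IsNeg (ρ (M.simple s) lam) :=
      hneg ▸ fun u => neg_nonpos.mpr (isPos_sroot s u)
    exact Or.inl ⟨⟨hls, hneg, hneg'⟩, fun h => hnot h.1.2, fun h => hnot h.1.2⟩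
  · have hμ : IsPosRoot M ρ (ρ (M.simple s) lam) := ⟨hlam.1.1.apply _,
      by_contra fun h => hls (hlam.1.eq_sroot_of_not_isPos_simple_apply hρ h)⟩
    by_cases hmin : IsMinimal M ρ (ρ (M.simple s) lam)
    · exact Or.inr (Or.inl ⟨fun h => hls h.1, hmin, fun h => h.2.2.2 hmin⟩)
    · exact Or.inr (Or.inr ⟨fun h => hls h.1, hmin, hμ, simple_apply_ne_sroot hρ hlam.1.2 s,
        hlam.dominates_sroot hρ hμ hmin, hmin⟩)
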